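/- For every nonzero integer k and real 0 < r < 1, the integral over [0, 2π] of e^{iky}·log((1+r²)/(1−r²) − cos(y)) dy equals −(2π/|k|)·((1−r)/(1+r))^{|k|}. -/

import Mathlib

open Real Complex

/-!
Put `ρ = (1 - r) / (1 + r) ∈ (0, 1)`. Then `(1 + r²) / (1 - r²) - cos y = |1 - ρ e^{iy}|² / (2ρ)`,
and the real part of `-log (1 - z) = ∑ zⁿ / n` at `z = ρ e^{iy}` gives the cosine series
`log (1 - 2ρ cos y + ρ²) = -2 ∑_{n ≥ 1} ρⁿ cos (n y) / n`. This series converges absolutely and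
uniformly, so it may be integrated termwise against `e^{iky}`; only the term `n = |k|` survives,
contributing `π · (-2 ρ^|k| / |k|)`, while the constant `-log (2ρ)` integrates to zero.
-/

theorem integral_exp_I_mul_int (m : ℤ) :
    ∫ y in (0:ℝ)..(2 * π), Complex.exp (I * m * y) = if m = 0 then (2 * π : ℂ) else 0 := by
  split_ifs with hm
  · simp [hm]
  have hc : I * m ≠ 0 := mul_ne_zero I_ne_zero (Int.cast_ne_zero.mpr hm)
  have hperiod : Complex.exp (I * m * (2 * π : ℝ)) = 1 := by
    rw [← Complex.exp_int_mul_two_pi_mul_I m]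
    push_cast
    ring_nf
  rw [integral_exp_mul_complex hc, hperiod]
  simp

theorem integral_exp_I_mul_int_mul_cos {k : ℤ} (hk : k ≠ 0) (n : ℕ) :
    ∫ y in (0:ℝ)..(2 * π), Complex.exp (I * k * y) * (Real.cos (n * y) : ℂ)
      = if n = k.natAbs then (π : ℂ) else 0 := by
  have hsplit : ∀ y : ℝ, Complex.exp (I * k * y) * (Real.cos (n * y) : ℂ)
      = (Complex.exp (I * ((k + n : ℤ) : ℂ) * y)
          + Complex.exp (I * ((k - n : ℤ) : ℂ) * y)) / 2 := by
    intro y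
    rw [Complex.ofReal_cos, Complex.cos, mul_div_assoc', mul_add, ← Complex.exp_add,
      ← Complex.exp_add]
    push_cast
    ring_nf
  simp_rw [hsplit]
  rw [intervalIntegral.integral_div, intervalIntegral.integral_add
      (Continuous.intervalIntegrable (by fun_prop) _ _)
      (Continuous.intervalIntegrable (by fun_prop) _ _),
    integral_exp_I_mul_int, integral_exp_I_mul_int]
  split_ifs <;> first | omega | ring

theorem integral_exp_I_mul_int_mul_of_hasSum_cos {a : ℕ → ℝ} {f : ℝ → ℝ}
    (hf : ∀ y, HasSum (fun n : ℕ => a n * Real.cos (n * y)) (f y)) {k : ℤ} (hk : k ≠ 0) :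
    ∫ y in (0:ℝ)..(2 * π), Complex.exp (I * k * y) * (f y : ℂ) = π * a k.natAbs := by
  have ha : Summable a := by simpa using (hf 0).summable
  have hterm : ∀ n : ℕ,
      ∫ y in (0:ℝ)..(2 * π), Complex.exp (I * k * y) * ((a n * Real.cos (n * y) : ℝ) : ℂ)
        = if n = k.natAbs then (π : ℂ) * a n else 0 := by
    intro n
    simp_rw [Complex.ofReal_mul, mul_left_comm _ (a n : ℂ)]
    rw [intervalIntegral.integral_const_mul, integral_exp_I_mul_int_mul_cos hk]
    split_ifs <;> ring
  have hsum : HasSum (fun n : ℕ => ∫ y in (0:ℝ)..(2 * π),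
      Complex.exp (I * k * y) * ((a n * Real.cos (n * y) : ℝ) : ℂ))
      (∫ y in (0:ℝ)..(2 * π), Complex.exp (I * k * y) * (f y : ℂ)) := by
    refine intervalIntegral.hasSum_integral_of_dominated_convergence (fun n _ => |a n|)
      (fun n => Continuous.aestronglyMeasurable (by fun_prop))
      (fun n => .of_forall fun y _ => ?_)
      (.of_forall fun _ _ => ha.abs) intervalIntegrable_const
      (.of_forall fun y _ => ?_)
    · have hexp : ‖Complex.exp (I * k * y)‖ = 1 := by simp [Complex.norm_exp]
      rw [norm_mul, hexp, one_mul, Complex.norm_real, Real.norm_eq_abs, abs_mul]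
      exact mul_le_of_le_one_right (abs_nonneg (a n)) (Real.abs_cos_le_one (n * y))
    · exact (Complex.ofRealCLM.hasSum (hf y)).mul_left _
  rw [funext hterm] at hsum
  rw [hsum.unique (hasSum_single k.natAbs fun n hn => if_neg hn), if_pos rfl]

theorem one_sub_two_mul_cos_add_sq_pos {ρ : ℝ} (hρ : |ρ| < 1) (y : ℝ) :
    0 < 1 - 2 * ρ * Real.cos y + ρ ^ 2 := by
  have hρcos : |ρ * Real.cos y| ≤ |ρ| := by
    rw [abs_mul]
    exact mul_le_of_le_one_right (abs_nonneg ρ) (Real.abs_cos_le_one y)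
  nlinarith [le_abs_self (ρ * Real.cos y), sq_abs ρ]

-- The `n = 0` term vanishes because `x / 0 = 0`.
theorem hasSum_log_one_sub_two_mul_cos_add_sq {ρ : ℝ} (hρ : |ρ| < 1) (y : ℝ) :
    HasSum (fun n : ℕ => -2 * ρ ^ n / n * Real.cos (n * y))
      (Real.log (1 - 2 * ρ * Real.cos y + ρ ^ 2)) := by
  set z : ℂ := ρ * Complex.exp (y * I)
  have hz : ‖z‖ < 1 := by simpa [z, Complex.norm_exp_ofReal_mul_I] using hρ
  have hpow_re : ∀ n : ℕ, (z ^ n / n).re = ρ ^ n * Real.cos (n * y) / n := by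
    intro n
    rw [Complex.div_natCast_re, mul_pow, ← Complex.exp_nat_mul, ← mul_assoc,
      ← Complex.ofReal_natCast, ← Complex.ofReal_mul, ← Complex.ofReal_pow, Complex.re_ofReal_mul,
      Complex.exp_ofReal_mul_I_re]
  have hnormSq : ‖1 - z‖ ^ 2 = 1 - 2 * ρ * Real.cos y + ρ ^ 2 := by
    rw [← Complex.normSq_eq_norm_sq, Complex.normSq_apply]
    simp only [z, Complex.sub_re, Complex.sub_im, Complex.one_re, Complex.one_im,
      Complex.re_ofReal_mul, Complex.im_ofReal_mul, Complex.exp_ofReal_mul_I_re,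
      Complex.exp_ofReal_mul_I_im]
    nlinarith [Real.sin_sq_add_cos_sq y]
  have hlog_re : (-Complex.log (1 - z)).re = -Real.log (1 - 2 * ρ * Real.cos y + ρ ^ 2) / 2 := by
    rw [Complex.neg_re, Complex.log_re, ← hnormSq, Real.log_pow]
    push_cast
    ring
  have h := (Complex.hasSum_re (Complex.hasSum_taylorSeries_neg_log hz)).mul_left (-2)
  simp only [hpow_re, hlog_re] at h
  rw [show Real.log (1 - 2 * ρ * Real.cos y + ρ ^ 2)
      = -2 * (-Real.log (1 - 2 * ρ * Real.cos y + ρ ^ 2) / 2) by ring]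
  exact h.congr_fun fun n => by ring

theorem integral_exp_log_kernel (r : ℝ) (hr0 : 0 < r) (hr1 : r < 1) (k : ℤ) (hk : k ≠ 0) :
    ∫ y in (0:ℝ)..(2 * π),
      Complex.exp (Complex.I * k * y) *
        ((Real.log ((1 + r ^ 2) / (1 - r ^ 2) - Real.cos y) : ℝ) : ℂ)
      = ((-(2 * π / (k.natAbs : ℝ)) * ((1 - r) / (1 + r)) ^ k.natAbs : ℝ) : ℂ) := by
  set ρ := (1 - r) / (1 + r) with hρ_def
  have hρ0 : 0 < ρ := div_pos (by linarith) (by linarith)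
  have hρ : |ρ| < 1 := by
    rw [abs_of_pos hρ0, div_lt_one (by linarith)]
    linarith
  have hlog : ∀ y, Real.log ((1 + r ^ 2) / (1 - r ^ 2) - Real.cos y)
      = Real.log (1 - 2 * ρ * Real.cos y + ρ ^ 2) - Real.log (2 * ρ) := by
    intro y
    rw [← Real.log_div (one_sub_two_mul_cos_add_sq_pos hρ y).ne' (by positivity)]
    congr 1
    have h₁ : 1 + r ≠ 0 := by linarith
    have h₂ : 1 - r ≠ 0 := by linarith
    rw [hρ_def, show 1 - r ^ 2 = (1 + r) * (1 - r) by ring]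
    field_simp
    ring
  have hseries : ∀ y, HasSum
      (fun n : ℕ => (-2 * ρ ^ n / n - if n = 0 then Real.log (2 * ρ) else 0) * Real.cos (n * y))
      (Real.log ((1 + r ^ 2) / (1 - r ^ 2) - Real.cos y)) := by
    intro y
    rw [hlog]
    refine ((hasSum_log_one_sub_two_mul_cos_add_sq hρ y).sub
      (hasSum_ite_eq 0 (Real.log (2 * ρ)))).congr_fun fun n => ?_
    rcases eq_or_ne n 0 with rfl | hn <;> simp [*]
  rw [integral_exp_I_mul_int_mul_of_hasSum_cos hseries hk, if_neg (Int.natAbs_ne_zero.2 hk)]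
  push_cast
  ring
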